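/- arXiv:2009.06234 — 7 statements merged into one kernel-verified Lean document; each statement's English description precedes it below -/
import Mathlib

section
/- Fix reals L > 0, B > 0, ε ∈ (0,1), β ∈ (0,1), H₁ > 0, H₂ > 0, p₁ > 0 and nonnegative constants κ₁, κ₂, C₁, C₂, f₁, f₂. Then the function E(p₂) = β·L·p₁/((1−ε)·B·log₂(1 + H₁·p₁/(H₁·p₂ + 1))) + (1−β)·L·p₂/((1−ε)·B·log₂(1 + H₂·p₂)) + κ₁·β·L·C₁·f₁² + κ₂·(1−β)·L·C₂·f₂² is strictly increasing on (0, ∞). -/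
open Real

lemma key_slope (a : ℝ) (ha : 0 < a) {x y : ℝ} (hx : 0 < x) (hxy : x < y) :
    x * Real.log (1 + a * y) < y * Real.log (1 + a * x) := by
  have hy : 0 < y := hx.trans hxy
  have ht0 : 0 < x / y := div_pos hx hy
  have ht1 : x / y < 1 := (div_lt_one hy).2 hxy
  have h1 : (1 : ℝ) + a * y ∈ Set.Ioi (0:ℝ) := by
    simp only [Set.mem_Ioi]; nlinarith
  have h2 : (1 : ℝ) ∈ Set.Ioi (0:ℝ) := by norm_num
  have hne : (1 : ℝ) + a * y ≠ 1 := by nlinarith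
  have ht1' : (0:ℝ) < 1 - x / y := by linarith
  have h := strictConcaveOn_log_Ioi.2 h1 h2 hne ht0 ht1' (by ring)
  simp only [smul_eq_mul, Real.log_one, mul_zero, add_zero] at h
  have harg : x / y * (1 + a * y) + (1 - x / y) * 1 = 1 + a * x := by
    field_simp; ring
  rw [harg] at h
  have h4 := mul_lt_mul_of_pos_left h hy
  have e : y * (x / y * Real.log (1 + a * y)) = x * Real.log (1 + a * y) := by
    field_simp
  rw [e] at h4
  linarith

theorem stmt_2 (L B ε β H₁ H₂ p₁ κ₁ κ₂ C₁ C₂ f₁ f₂ : ℝ)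
    (hL : 0 < L) (hB : 0 < B) (hε : ε ∈ Set.Ioo (0 : ℝ) 1)
    (hβ : β ∈ Set.Ioo (0 : ℝ) 1) (hH₁ : 0 < H₁) (hH₂ : 0 < H₂) (hp₁ : 0 < p₁)
    (hκ₁ : 0 ≤ κ₁) (hκ₂ : 0 ≤ κ₂) (hC₁ : 0 ≤ C₁) (hC₂ : 0 ≤ C₂)
    (hf₁ : 0 ≤ f₁) (hf₂ : 0 ≤ f₂) :
    StrictMonoOn (fun p₂ : ℝ =>
      β * L * p₁ / ((1 - ε) * B * Real.logb 2 (1 + H₁ * p₁ / (H₁ * p₂ + 1)))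
        + (1 - β) * L * p₂ / ((1 - ε) * B * Real.logb 2 (1 + H₂ * p₂))
        + κ₁ * β * L * C₁ * f₁ ^ 2 + κ₂ * (1 - β) * L * C₂ * f₂ ^ 2)
      (Set.Ioi 0) := by
  obtain ⟨hε0, hε1⟩ := hε
  obtain ⟨hβ0, hβ1⟩ := hβ
  have hD : 0 < (1 - ε) * B := mul_pos (by linarith) hB
  intro x hx y hy hxy
  simp only [Set.mem_Ioi] at hx hy
  have hdx : 0 < H₁ * x + 1 := by nlinarith
  have hdy : 0 < H₁ * y + 1 := by nlinarith
  have hfrac : H₁ * p₁ / (H₁ * y + 1) < H₁ * p₁ / (H₁ * x + 1) :=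
    div_lt_div_of_pos_left (mul_pos hH₁ hp₁) hdx (by nlinarith)
  have hfy : 0 < H₁ * p₁ / (H₁ * y + 1) := div_pos (mul_pos hH₁ hp₁) hdy
  have hargy : 1 < 1 + H₁ * p₁ / (H₁ * y + 1) := by linarith
  have hargx : 1 < 1 + H₁ * p₁ / (H₁ * x + 1) := by linarith
  have hLy : 0 < Real.logb 2 (1 + H₁ * p₁ / (H₁ * y + 1)) :=
    Real.logb_pos one_lt_two hargy
  have hLlt : Real.logb 2 (1 + H₁ * p₁ / (H₁ * y + 1))
      < Real.logb 2 (1 + H₁ * p₁ / (H₁ * x + 1)) :=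
    Real.logb_lt_logb one_lt_two (by linarith) (by linarith)
  have term1 : β * L * p₁ / ((1 - ε) * B * Real.logb 2 (1 + H₁ * p₁ / (H₁ * x + 1)))
      < β * L * p₁ / ((1 - ε) * B * Real.logb 2 (1 + H₁ * p₁ / (H₁ * y + 1))) :=
    div_lt_div_of_pos_left (by positivity) (mul_pos hD hLy)
      (mul_lt_mul_of_pos_left hLlt hD)
  -- second term
  have hax : 1 < 1 + H₂ * x := by nlinarith
  have hay : 1 < 1 + H₂ * y := by nlinarith
  have hMx : 0 < Real.logb 2 (1 + H₂ * x) := Real.logb_pos one_lt_two hax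
  have hMy : 0 < Real.logb 2 (1 + H₂ * y) := Real.logb_pos one_lt_two hay
  have hkey := key_slope H₂ hH₂ hx hxy
  have hlog2 : 0 < Real.log 2 := Real.log_pos one_lt_two
  have h2 : x * Real.logb 2 (1 + H₂ * y) < y * Real.logb 2 (1 + H₂ * x) := by
    simp only [Real.logb, ← mul_div_assoc]
    exact (div_lt_div_iff_of_pos_right hlog2).mpr hkey
  have term2 : (1 - β) * L * x / ((1 - ε) * B * Real.logb 2 (1 + H₂ * x))
      < (1 - β) * L * y / ((1 - ε) * B * Real.logb 2 (1 + H₂ * y)) := by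
    rw [div_lt_div_iff₀ (mul_pos hD hMx) (mul_pos hD hMy)]
    have hcD : 0 < (1 - β) * L * ((1 - ε) * B) := by
      have : 0 < (1 - β) * L := mul_pos (by linarith) hL
      exact mul_pos this hD
    have h3 := mul_lt_mul_of_pos_left h2 hcD
    have e1 : (1 - β) * L * x * ((1 - ε) * B * Real.logb 2 (1 + H₂ * y))
        = (1 - β) * L * ((1 - ε) * B) * (x * Real.logb 2 (1 + H₂ * y)) := by ring
    have e2 : (1 - β) * L * y * ((1 - ε) * B * Real.logb 2 (1 + H₂ * x))
        = (1 - β) * L * ((1 - ε) * B) * (y * Real.logb 2 (1 + H₂ * x)) := by ring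
    rw [e1, e2]; exact h3
  simp only []
  linarith
end

section
/- Fix real parameters T_max > 0, A > 0, L > 0, C₁, C₂, f₁, f₂, κ₁, κ₂ > 0 and 0 < H₁ < H₂, define g(β) = T_max·(2^A/H₂ + 2^(A·β)·(1/H₁ − 1/H₂) − 1/H₁) + (κ₁·L·C₁·f₁² − κ₂·L·C₂·f₂²)·β + κ₂·L·C₂·f₂², and set D = κ₂·L·C₂·f₂² − κ₁·L·C₁·f₁² and W = T_max·A·(ln 2)·(1/H₁ − 1/H₂). If W < D, then β̂₁ = (1/A)·log₂(D/W) satisfies β̂₁ > 0, the derivative of g vanishes at β̂₁, g is strictly decreasing on (−∞, β̂₁], and g is strictly increasing on [β̂₁, ∞). -/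
open Real Set

/-!
The derivative of `g` is `W · 2^(Aβ) - D` with `W > 0`, so it is strictly increasing and
vanishes exactly where `2^(Aβ) = D/W`, i.e. at `β̂₁`, which is positive because `D/W > 1`.
A function whose derivative is strictly increasing and vanishes at `x₀` strictly decreases to
the left of `x₀` and strictly increases to the right of it.
-/

section StrictMonoDeriv

variable {f f' : ℝ → ℝ} {x₀ : ℝ}

theorem strictAntiOn_Iic_of_strictMono_deriv (hf : ∀ x, HasDerivAt f (f' x) x)
    (hf' : StrictMono f') (hx₀ : f' x₀ = 0) : StrictAntiOn f (Iic x₀) :=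
  strictAntiOn_of_hasDerivWithinAt_neg (convex_Iic x₀)
    (fun x _ => (hf x).continuousAt.continuousWithinAt)
    (fun x _ => (hf x).hasDerivWithinAt)
    (fun x hx => by
      rw [interior_Iic] at hx
      exact hx₀ ▸ hf' hx)

theorem strictMonoOn_Ici_of_strictMono_deriv (hf : ∀ x, HasDerivAt f (f' x) x)
    (hf' : StrictMono f') (hx₀ : f' x₀ = 0) : StrictMonoOn f (Ici x₀) :=
  strictMonoOn_of_hasDerivWithinAt_pos (convex_Ici x₀)
    (fun x _ => (hf x).continuousAt.continuousWithinAt)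
    (fun x _ => (hf x).hasDerivWithinAt)
    (fun x hx => by
      rw [interior_Ici] at hx
      exact hx₀ ▸ hf' hx)

end StrictMonoDeriv

theorem rpow_mul_one_div_mul_logb {b A y : ℝ} (hb : 0 < b) (hb₁ : b ≠ 1) (hA : A ≠ 0)
    (hy : 0 < y) : b ^ (A * (1 / A * logb b y)) = y := by
  rw [← mul_assoc, mul_one_div_cancel hA, one_mul, rpow_logb hb hb₁ hy]

theorem strictMono_mul_const_rpow_mul_sub {b W A D : ℝ} (hb : 1 < b) (hW : 0 < W) (hA : 0 < A) :
    StrictMono fun x : ℝ => W * b ^ (A * x) - D := fun _ _ hxy =>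
  sub_lt_sub_right (mul_lt_mul_of_pos_left
    (rpow_lt_rpow_of_exponent_lt hb (mul_lt_mul_of_pos_left hxy hA)) hW) D

theorem stmt_13_general (Tmax A L C₁ C₂ f₁ f₂ κ₁ κ₂ H₁ H₂ : ℝ)
    (hT : 0 < Tmax) (hA : 0 < A) (hH₁ : 0 < H₁) (hH₁₂ : H₁ < H₂)
    (hWD : Tmax * A * Real.log 2 * (1 / H₁ - 1 / H₂)
      < κ₂ * L * C₂ * f₂ ^ 2 - κ₁ * L * C₁ * f₁ ^ 2) :
    let D : ℝ := κ₂ * L * C₂ * f₂ ^ 2 - κ₁ * L * C₁ * f₁ ^ 2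
    let W : ℝ := Tmax * A * Real.log 2 * (1 / H₁ - 1 / H₂)
    let β₁ : ℝ := (1 / A) * Real.logb 2 (D / W)
    let g : ℝ → ℝ := fun β =>
      Tmax * ((2 : ℝ) ^ A / H₂ + (2 : ℝ) ^ (A * β) * (1 / H₁ - 1 / H₂) - 1 / H₁)
        + (κ₁ * L * C₁ * f₁ ^ 2 - κ₂ * L * C₂ * f₂ ^ 2) * β
        + κ₂ * L * C₂ * f₂ ^ 2
    0 < β₁ ∧ HasDerivAt g 0 β₁ ∧
      StrictAntiOn g (Set.Iic β₁) ∧ StrictMonoOn g (Set.Ici β₁) := by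
  intro D W β₁ g
  have hc : 0 < 1 / H₁ - 1 / H₂ := sub_pos.2 (one_div_lt_one_div_of_lt hH₁ hH₁₂)
  have hW : 0 < W := by positivity
  have hDW : 1 < D / W := (one_lt_div hW).2 hWD
  have hg : ∀ x, HasDerivAt g (W * 2 ^ (A * x) - D) x := fun x => by
    have hexp : HasDerivAt (fun β : ℝ => (2 : ℝ) ^ (A * β)) (log 2 * A * 2 ^ (A * x)) x := by
      simpa using ((hasDerivAt_id x).const_mul A).const_rpow two_pos
    refine (((((hexp.mul_const (1 / H₁ - 1 / H₂)).const_add ((2 : ℝ) ^ A / H₂)).sub_const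
      (1 / H₁)).const_mul Tmax).add ((hasDerivAt_id x).const_mul
        (κ₁ * L * C₁ * f₁ ^ 2 - κ₂ * L * C₂ * f₂ ^ 2))).add_const (κ₂ * L * C₂ * f₂ ^ 2)
      |>.congr_deriv ?_
    ring
  have hg₀ : W * 2 ^ (A * β₁) - D = 0 := by
    rw [rpow_mul_one_div_mul_logb two_pos (by norm_num) hA.ne' (one_pos.trans hDW),
      mul_div_cancel₀ _ hW.ne', sub_self]
  have hmono := strictMono_mul_const_rpow_mul_sub (D := D) one_lt_two hW hA
  exact ⟨mul_pos (one_div_pos.2 hA) (logb_pos one_lt_two hDW), hg₀ ▸ hg β₁,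
    strictAntiOn_Iic_of_strictMono_deriv hg hmono hg₀,
    strictMonoOn_Ici_of_strictMono_deriv hg hmono hg₀⟩

theorem stmt_13 (Tmax A L C₁ C₂ f₁ f₂ κ₁ κ₂ H₁ H₂ : ℝ)
    (hT : 0 < Tmax) (hA : 0 < A) (hL : 0 < L)
    (hC₁ : 0 < C₁) (hC₂ : 0 < C₂) (hf₁ : 0 < f₁) (hf₂ : 0 < f₂)
    (hκ₁ : 0 < κ₁) (hκ₂ : 0 < κ₂) (hH₁ : 0 < H₁) (hH₁₂ : H₁ < H₂)
    (hWD : Tmax * A * Real.log 2 * (1 / H₁ - 1 / H₂)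
      < κ₂ * L * C₂ * f₂ ^ 2 - κ₁ * L * C₁ * f₁ ^ 2) :
    let D : ℝ := κ₂ * L * C₂ * f₂ ^ 2 - κ₁ * L * C₁ * f₁ ^ 2
    let W : ℝ := Tmax * A * Real.log 2 * (1 / H₁ - 1 / H₂)
    let β₁ : ℝ := (1 / A) * Real.logb 2 (D / W)
    let g : ℝ → ℝ := fun β =>
      Tmax * ((2 : ℝ) ^ A / H₂ + (2 : ℝ) ^ (A * β) * (1 / H₁ - 1 / H₂) - 1 / H₁)
        + (κ₁ * L * C₁ * f₁ ^ 2 - κ₂ * L * C₂ * f₂ ^ 2) * β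
        + κ₂ * L * C₂ * f₂ ^ 2
    0 < β₁ ∧ HasDerivAt g 0 β₁ ∧
      StrictAntiOn g (Set.Iic β₁) ∧ StrictMonoOn g (Set.Ici β₁) :=
  stmt_13_general Tmax A L C₁ C₂ f₁ f₂ κ₁ κ₂ H₁ H₂ hT hA hH₁ hH₁₂ hWD
end

section
/- Fix real parameters T_max > 0, A > 0, P_max > 0, L > 0, C₁, C₂, f₁, f₂, κ₁, κ₂ > 0 and 0 < H₁ < H₂; define g(β) = T_max·(2^A/H₂ + 2^(A·β)·(1/H₁ − 1/H₂) − 1/H₁) + (κ₁·L·C₁·f₁² − κ₂·L·C₂·f₂²)·β + κ₂·L·C₂·f₂², D = κ₂·L·C₂·f₂² − κ₁·L·C₁·f₁², W = T_max·A·(ln 2)·(1/H₁ − 1/H₂), and β̂_max = (1/A)·log₂((P_max + 1/H₁ − 2^A/H₂)/(1/H₁ − 1/H₂)). If 2^A ≤ 1 + H₁·P_max and W·2^A ≤ D, then β̂_max ≥ 1 and g(1) ≤ g(β) for every β ∈ [0, 1]. -/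
open Real

theorem stmt_15 (Tmax A Pmax L C₁ C₂ f₁ f₂ κ₁ κ₂ H₁ H₂ : ℝ)
    (hT : 0 < Tmax) (hA : 0 < A) (hP : 0 < Pmax) (hL : 0 < L)
    (hC₁ : 0 < C₁) (hC₂ : 0 < C₂) (hf₁ : 0 < f₁) (hf₂ : 0 < f₂)
    (hκ₁ : 0 < κ₁) (hκ₂ : 0 < κ₂) (hH₁ : 0 < H₁) (hH₁₂ : H₁ < H₂) :
    let g : ℝ → ℝ := fun β =>
      Tmax * ((2 : ℝ) ^ A / H₂ + (2 : ℝ) ^ (A * β) * (1 / H₁ - 1 / H₂) - 1 / H₁)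
        + (κ₁ * L * C₁ * f₁ ^ 2 - κ₂ * L * C₂ * f₂ ^ 2) * β
        + κ₂ * L * C₂ * f₂ ^ 2
    let D : ℝ := κ₂ * L * C₂ * f₂ ^ 2 - κ₁ * L * C₁ * f₁ ^ 2
    let W : ℝ := Tmax * A * Real.log 2 * (1 / H₁ - 1 / H₂)
    let βmax : ℝ := (1 / A) * Real.logb 2
      ((Pmax + 1 / H₁ - (2 : ℝ) ^ A / H₂) / (1 / H₁ - 1 / H₂))
    (2 : ℝ) ^ A ≤ 1 + H₁ * Pmax → W * (2 : ℝ) ^ A ≤ D →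
      1 ≤ βmax ∧ ∀ β ∈ Set.Icc (0 : ℝ) 1, g 1 ≤ g β := by
  intro g D W βmax h1 h2
  have hH₂ : 0 < H₂ := hH₁.trans hH₁₂
  have hδ : 0 < 1 / H₁ - 1 / H₂ := by
    rw [sub_pos]
    exact one_div_lt_one_div_of_lt hH₁ hH₁₂
  have h2A : (0:ℝ) < (2:ℝ) ^ A := Real.rpow_pos_of_pos two_pos A
  constructor
  · -- βmax ≥ 1
    have hinv₁ : H₁ * (1 / H₁) = 1 := by field_simp
    have h1' : (2:ℝ) ^ A * (1 / H₁) ≤ Pmax + 1 / H₁ := by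
      have := mul_le_mul_of_nonneg_right h1 (le_of_lt (one_div_pos.mpr hH₁))
      nlinarith
    have hx : (2:ℝ) ^ A ≤ (Pmax + 1 / H₁ - (2:ℝ) ^ A / H₂) / (1 / H₁ - 1 / H₂) := by
      rw [le_div_iff₀ hδ]
      have h2 : (2:ℝ) ^ A / H₂ = (2:ℝ) ^ A * (1 / H₂) := by ring
      nlinarith
    have hlog : A ≤ Real.logb 2 ((Pmax + 1 / H₁ - (2:ℝ) ^ A / H₂) / (1 / H₁ - 1 / H₂)) := by
      have := Real.logb_le_logb_of_le (b := 2) one_lt_two h2A hx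
      rwa [Real.logb_rpow (by norm_num : (0:ℝ) < 2) (by norm_num)] at this
    have : βmax = (1 / A) * Real.logb 2 ((Pmax + 1 / H₁ - (2:ℝ) ^ A / H₂) / (1 / H₁ - 1 / H₂)) := rfl
    rw [this]
    calc (1:ℝ) = (1/A) * A := by field_simp
    _ ≤ _ := by
        apply mul_le_mul_of_nonneg_left hlog (by positivity)
  · intro β hβ
    obtain ⟨hβ0, hβ1⟩ := hβ
    have key : (2:ℝ) ^ A * (1 + Real.log 2 * (A * (β - 1))) ≤ (2:ℝ) ^ (A * β) := by
      have hexpand : (2:ℝ) ^ (A * β) = (2:ℝ) ^ A * Real.exp (Real.log 2 * (A * (β - 1))) := by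
        rw [Real.rpow_def_of_pos two_pos, Real.rpow_def_of_pos two_pos, ← Real.exp_add]
        ring_nf
      rw [hexpand]
      have hexp := Real.add_one_le_exp (Real.log 2 * (A * (β - 1)))
      nlinarith
    have key2 := mul_le_mul_of_nonneg_left key (mul_nonneg hT.le hδ.le)
    have key3 : 0 ≤ (1 - β) * (D - W * (2:ℝ) ^ A) :=
      mul_nonneg (by linarith) (by linarith)
    have hA1 : (2:ℝ) ^ (A * 1) = (2:ℝ) ^ A := by rw [mul_one]
    simp only [g, D, W, mul_one] at *
    nlinarith [key2, key3, hA1]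
end

section
/- Fix real parameters T_max > 0, A > 0, P_max > 0, L > 0, C₁, C₂, f₁, f₂, κ₁, κ₂ > 0 and 0 < H₁ < H₂; define g(β) = T_max·(2^A/H₂ + 2^(A·β)·(1/H₁ − 1/H₂) − 1/H₁) + (κ₁·L·C₁·f₁² − κ₂·L·C₂·f₂²)·β + κ₂·L·C₂·f₂², D = κ₂·L·C₂·f₂² − κ₁·L·C₁·f₁², W = T_max·A·(ln 2)·(1/H₁ − 1/H₂), and β̂_max = (1/A)·log₂((P_max + 1/H₁ − 2^A/H₂)/(1/H₁ − 1/H₂)). If 1 + H₁·P_max ≤ 2^A ≤ 1 + H₂·P_max and D ≥ W·(P_max + 1/H₁ − 2^A/H₂)/(1/H₁ − 1/H₂), then 0 ≤ β̂_max ≤ 1 and g(β̂_max) ≤ g(β) for every β ∈ [0, β̂_max]. -/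
open Real

theorem stmt_16 (Tmax A Pmax L C₁ C₂ f₁ f₂ κ₁ κ₂ H₁ H₂ : ℝ)
    (hT : 0 < Tmax) (hA : 0 < A) (hP : 0 < Pmax) (hL : 0 < L)
    (hC₁ : 0 < C₁) (hC₂ : 0 < C₂) (hf₁ : 0 < f₁) (hf₂ : 0 < f₂)
    (hκ₁ : 0 < κ₁) (hκ₂ : 0 < κ₂) (hH₁ : 0 < H₁) (hH₁₂ : H₁ < H₂) :
    let g : ℝ → ℝ := fun β =>
      Tmax * ((2 : ℝ) ^ A / H₂ + (2 : ℝ) ^ (A * β) * (1 / H₁ - 1 / H₂) - 1 / H₁)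
        + (κ₁ * L * C₁ * f₁ ^ 2 - κ₂ * L * C₂ * f₂ ^ 2) * β
        + κ₂ * L * C₂ * f₂ ^ 2
    let D : ℝ := κ₂ * L * C₂ * f₂ ^ 2 - κ₁ * L * C₁ * f₁ ^ 2
    let W : ℝ := Tmax * A * Real.log 2 * (1 / H₁ - 1 / H₂)
    let βmax : ℝ := (1 / A) * Real.logb 2
      ((Pmax + 1 / H₁ - (2 : ℝ) ^ A / H₂) / (1 / H₁ - 1 / H₂))
    1 + H₁ * Pmax ≤ (2 : ℝ) ^ A → (2 : ℝ) ^ A ≤ 1 + H₂ * Pmax →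
      W * ((Pmax + 1 / H₁ - (2 : ℝ) ^ A / H₂) / (1 / H₁ - 1 / H₂)) ≤ D →
      (0 ≤ βmax ∧ βmax ≤ 1) ∧ ∀ β ∈ Set.Icc (0 : ℝ) βmax, g βmax ≤ g β := by
  intro g D W βmax h1 h2 hD
  have hH₂ : 0 < H₂ := hH₁.trans hH₁₂
  have hh : (0:ℝ) < 1 / H₁ - 1 / H₂ := by
    have := one_div_lt_one_div_of_lt hH₁ hH₁₂
    linarith
  set R : ℝ := (Pmax + 1 / H₁ - (2 : ℝ) ^ A / H₂) / (1 / H₁ - 1 / H₂) with hR_def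
  -- numerator bounds
  have e1 : Pmax + 1 / H₁ ≤ (2:ℝ) ^ A / H₁ := by
    rw [le_div_iff₀ hH₁]
    have hc : 1 / H₁ * H₁ = 1 := one_div_mul_cancel hH₁.ne'
    nlinarith [hc]
  have e2 : (2:ℝ) ^ A / H₂ ≤ 1 / H₂ + Pmax := by
    rw [div_le_iff₀ hH₂]
    have hc : 1 / H₂ * H₂ = 1 := one_div_mul_cancel hH₂.ne'
    nlinarith [hc]
  have hR1 : (1:ℝ) ≤ R := by
    rw [hR_def, le_div_iff₀ hh]; linarith
  have hRpos : (0:ℝ) < R := lt_of_lt_of_le one_pos hR1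
  have h2A : (0:ℝ) < (2:ℝ) ^ A := rpow_pos_of_pos two_pos A
  have hRle : R ≤ (2:ℝ) ^ A := by
    rw [hR_def, div_le_iff₀ hh]
    have : (2:ℝ) ^ A * (1 / H₁ - 1 / H₂) = (2:ℝ)^A / H₁ - (2:ℝ)^A / H₂ := by ring
    rw [this]; linarith
  have hAβmax : A * βmax = Real.logb 2 R := by
    show A * (1 / A * Real.logb 2 R) = Real.logb 2 R
    field_simp
  have hXR : (2:ℝ) ^ (A * βmax) = R := by
    rw [hAβmax]; exact rpow_logb two_pos (by norm_num) hRpos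
  have hβ0 : 0 ≤ βmax := by
    have hl : 0 ≤ Real.logb 2 R := logb_nonneg one_lt_two hR1
    have : 0 ≤ (1 / A) * Real.logb 2 R := mul_nonneg (by positivity) hl
    exact this
  have hβ1 : βmax ≤ 1 := by
    have hl : Real.logb 2 R ≤ Real.logb 2 ((2:ℝ) ^ A) :=
      Real.logb_le_logb_of_le one_lt_two hRpos hRle
    rw [Real.logb_rpow two_pos (by norm_num)] at hl
    have : (1 / A) * Real.logb 2 R ≤ (1 / A) * A :=
      mul_le_mul_of_nonneg_left hl (by positivity)
    rw [one_div_mul_cancel hA.ne'] at this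
    exact this
  refine ⟨⟨hβ0, hβ1⟩, ?_⟩
  intro β hβ
  obtain ⟨hβl, hβr⟩ := hβ
  have hβd : 0 ≤ βmax - β := by linarith
  -- exponential convexity bound
  have hexp : (2:ℝ) ^ (A * βmax) - (2:ℝ) ^ (A * β) ≤
      Real.log 2 * A * (βmax - β) * R := by
    have ha : (2:ℝ) ^ (A * βmax) = Real.exp (Real.log 2 * (A * βmax)) := by
      rw [rpow_def_of_pos two_pos]
    have hb : (2:ℝ) ^ (A * β) = Real.exp (Real.log 2 * (A * β)) := by
      rw [rpow_def_of_pos two_pos]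
    set a := Real.log 2 * (A * βmax)
    set b := Real.log 2 * (A * β)
    have hba : Real.exp b = Real.exp (b - a) * Real.exp a := by
      rw [← Real.exp_add]; ring_nf
    have h1e := Real.add_one_le_exp (b - a)
    have hea : 0 < Real.exp a := Real.exp_pos a
    have key : Real.exp a - Real.exp b ≤ (a - b) * Real.exp a := by nlinarith
    rw [ha, hb]
    have haR : Real.exp a = R := by rw [← ha, hXR]
    calc Real.exp a - Real.exp b ≤ (a - b) * Real.exp a := key
      _ = Real.log 2 * A * (βmax - β) * R := by rw [haR]; simp only [a, b]; ring
  have hstep : Tmax * ((2:ℝ) ^ (A * βmax) - (2:ℝ) ^ (A * β)) * (1 / H₁ - 1 / H₂) ≤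
      Tmax * (Real.log 2 * A * (βmax - β) * R) * (1 / H₁ - 1 / H₂) := by
    apply mul_le_mul_of_nonneg_right _ hh.le
    exact mul_le_mul_of_nonneg_left hexp hT.le
  have heq : Tmax * (Real.log 2 * A * (βmax - β) * R) * (1 / H₁ - 1 / H₂) =
      (W * R) * (βmax - β) := by
    show _ = (Tmax * A * Real.log 2 * (1 / H₁ - 1 / H₂) * R) * (βmax - β)
    ring
  have hfin : (W * R) * (βmax - β) ≤ D * (βmax - β) :=
    mul_le_mul_of_nonneg_right hD hβd
  have hgid : g β - g βmax =
      D * (βmax - β) -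
      Tmax * ((2:ℝ) ^ (A * βmax) - (2:ℝ) ^ (A * β)) * (1 / H₁ - 1 / H₂) := by
    simp only [g, D]; ring
  clear_value g D W βmax R
  linarith
end

section
/- Fix real parameters T_max > 0, A > 0, P_max > 0, L > 0, C₁, C₂, f₁, f₂, κ₁, κ₂ > 0 and 0 < H₁ < H₂; define g(β) = T_max·(2^A/H₂ + 2^(A·β)·(1/H₁ − 1/H₂) − 1/H₁) + (κ₁·L·C₁·f₁² − κ₂·L·C₂·f₂²)·β + κ₂·L·C₂·f₂², D = κ₂·L·C₂·f₂² − κ₁·L·C₁·f₁², W = T_max·A·(ln 2)·(1/H₁ − 1/H₂), β̂₁ = (1/A)·log₂(D/W), and β̂_max = (1/A)·log₂((P_max + 1/H₁ − 2^A/H₂)/(1/H₁ − 1/H₂)). If 2^A ≤ 1 + H₁·P_max and W ≤ D ≤ W·2^A, then β̂_max ≥ 1, 0 ≤ β̂₁ ≤ 1, and g(β̂₁) ≤ g(β) for every β ∈ [0, 1]. -/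
open Real

theorem stmt_17 (Tmax A Pmax L C₁ C₂ f₁ f₂ κ₁ κ₂ H₁ H₂ : ℝ)
    (hT : 0 < Tmax) (hA : 0 < A) (hP : 0 < Pmax) (hL : 0 < L)
    (hC₁ : 0 < C₁) (hC₂ : 0 < C₂) (hf₁ : 0 < f₁) (hf₂ : 0 < f₂)
    (hκ₁ : 0 < κ₁) (hκ₂ : 0 < κ₂) (hH₁ : 0 < H₁) (hH₁₂ : H₁ < H₂) :
    let g : ℝ → ℝ := fun β =>
      Tmax * ((2 : ℝ) ^ A / H₂ + (2 : ℝ) ^ (A * β) * (1 / H₁ - 1 / H₂) - 1 / H₁)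
        + (κ₁ * L * C₁ * f₁ ^ 2 - κ₂ * L * C₂ * f₂ ^ 2) * β
        + κ₂ * L * C₂ * f₂ ^ 2
    let D : ℝ := κ₂ * L * C₂ * f₂ ^ 2 - κ₁ * L * C₁ * f₁ ^ 2
    let W : ℝ := Tmax * A * Real.log 2 * (1 / H₁ - 1 / H₂)
    let β₁ : ℝ := (1 / A) * Real.logb 2 (D / W)
    let βmax : ℝ := (1 / A) * Real.logb 2
      ((Pmax + 1 / H₁ - (2 : ℝ) ^ A / H₂) / (1 / H₁ - 1 / H₂))
    (2 : ℝ) ^ A ≤ 1 + H₁ * Pmax → W ≤ D → D ≤ W * (2 : ℝ) ^ A →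
      1 ≤ βmax ∧ (0 ≤ β₁ ∧ β₁ ≤ 1) ∧ ∀ β ∈ Set.Icc (0 : ℝ) 1, g β₁ ≤ g β := by
  intro g D W β₁ βmax h1 h2 h3
  have hH₂ : 0 < H₂ := hH₁.trans hH₁₂
  have hc : 0 < 1 / H₁ - 1 / H₂ := by
    have : 1 / H₂ < 1 / H₁ := one_div_lt_one_div_of_lt hH₁ hH₁₂
    linarith
  have hlog2 : 0 < Real.log 2 := Real.log_pos (by norm_num)
  have hW : 0 < W := by
    have : 0 < Tmax * A * Real.log 2 * (1 / H₁ - 1 / H₂) := by positivity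
    simpa [W] using this
  have hD : 0 < D := hW.trans_le h2
  have hratio1 : 1 ≤ D / W := (one_le_div hW).2 h2
  have hratio2 : D / W ≤ (2 : ℝ) ^ A := by
    rw [div_le_iff₀ hW]
    linarith [h3, mul_comm W ((2 : ℝ) ^ A)]
  have hb2 : (1 : ℝ) < 2 := by norm_num
  -- βmax ≥ 1
  have hβmax : 1 ≤ βmax := by
    have hx : (2 : ℝ) ^ A ≤ (Pmax + 1 / H₁ - (2 : ℝ) ^ A / H₂) / (1 / H₁ - 1 / H₂) := by
      rw [le_div_iff₀ hc]
      have hdiv : (2 : ℝ) ^ A / H₁ ≤ 1 / H₁ + Pmax := by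
        rw [div_le_iff₀ hH₁]
        have : (1 / H₁ + Pmax) * H₁ = 1 + H₁ * Pmax := by field_simp
        rw [this]; exact h1
      have hexp : (2 : ℝ) ^ A * (1 / H₁ - 1 / H₂) = (2:ℝ)^A / H₁ - (2:ℝ)^A / H₂ := by
        ring
      linarith [hdiv, hexp]
    have hxpos : (0 : ℝ) < (Pmax + 1 / H₁ - (2 : ℝ) ^ A / H₂) / (1 / H₁ - 1 / H₂) :=
      lt_of_lt_of_le (by positivity) hx
    have hlb : A ≤ Real.logb 2 ((Pmax + 1 / H₁ - (2 : ℝ) ^ A / H₂) / (1 / H₁ - 1 / H₂)) := by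
      rw [Real.le_logb_iff_rpow_le hb2 hxpos]
      exact hx
    have : 1 * A ≤ Real.logb 2 ((Pmax + 1 / H₁ - (2 : ℝ) ^ A / H₂) / (1 / H₁ - 1 / H₂)) := by
      linarith
    calc (1 : ℝ) = (1 / A) * A := by field_simp
      _ ≤ βmax := by
        unfold βmax
        have hA' : 0 ≤ 1 / A := by positivity
        nlinarith [hlb]
  -- β₁ ∈ [0,1]
  have hlogb_nonneg : 0 ≤ Real.logb 2 (D / W) := Real.logb_nonneg hb2 hratio1
  have hlogb_le : Real.logb 2 (D / W) ≤ A := by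
    have h2' : Real.logb 2 (D / W) ≤ Real.logb 2 ((2 : ℝ) ^ A) :=
      Real.logb_le_logb_of_le hb2 (by positivity) hratio2
    rwa [Real.logb_rpow (by norm_num) (by norm_num)] at h2'
  have hβ₁0 : 0 ≤ β₁ := by
    unfold β₁; positivity
  have hβ₁1 : β₁ ≤ 1 := by
    unfold β₁
    rw [mul_comm, mul_one_div, div_le_one hA]
    exact hlogb_le
  refine ⟨hβmax, ⟨hβ₁0, hβ₁1⟩, ?_⟩
  -- minimization
  have hpow : (2 : ℝ) ^ (A * β₁) = D / W := by
    have hAβ : A * β₁ = Real.logb 2 (D / W) := by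
      unfold β₁; field_simp
    rw [hAβ, Real.rpow_logb (by norm_num) (by norm_num) (by positivity)]
  have hWD : Tmax * A * Real.log 2 * (1 / H₁ - 1 / H₂) * (2 : ℝ) ^ (A * β₁) = D := by
    have : W * (2 : ℝ) ^ (A * β₁) = D := by
      rw [hpow]; field_simp
    simpa [W] using this
  intro β _
  have tangent : (2 : ℝ) ^ (A * β₁) * (1 + Real.log 2 * (A * β - A * β₁)) ≤ (2 : ℝ) ^ (A * β) := by
    rw [Real.rpow_def_of_pos (by norm_num : (0:ℝ) < 2),
        Real.rpow_def_of_pos (by norm_num : (0:ℝ) < 2)]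
    have hkey := Real.add_one_le_exp (Real.log 2 * (A * β) - Real.log 2 * (A * β₁))
    have hmul : Real.exp (Real.log 2 * (A * β)) =
        Real.exp (Real.log 2 * (A * β₁)) *
          Real.exp (Real.log 2 * (A * β) - Real.log 2 * (A * β₁)) := by
      rw [← Real.exp_add]; ring_nf
    nlinarith [Real.exp_pos (Real.log 2 * (A * β₁)), hkey, hmul,
      mul_le_mul_of_nonneg_left hkey (Real.exp_pos (Real.log 2 * (A * β₁))).le]
  have hdiff : g β - g β₁ = Tmax * (1 / H₁ - 1 / H₂) *
      ((2 : ℝ) ^ (A * β) - (2 : ℝ) ^ (A * β₁) * (1 + Real.log 2 * (A * β - A * β₁))) := by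
    unfold g D at *
    linear_combination (β - β₁) * hWD
  have hnn : 0 ≤ g β - g β₁ := by
    rw [hdiff]
    have := sub_nonneg.mpr tangent
    positivity
  linarith
end

section
/- Fix real parameters T_max > 0, A > 0, P_max > 0, L > 0, C₁, C₂, f₁, f₂, κ₁, κ₂ > 0 and 0 < H₁ < H₂; define g(β) = T_max·(2^A/H₂ + 2^(A·β)·(1/H₁ − 1/H₂) − 1/H₁) + (κ₁·L·C₁·f₁² − κ₂·L·C₂·f₂²)·β + κ₂·L·C₂·f₂², D = κ₂·L·C₂·f₂² − κ₁·L·C₁·f₁², W = T_max·A·(ln 2)·(1/H₁ − 1/H₂), β̂₁ = (1/A)·log₂(D/W), and β̂_max = (1/A)·log₂((P_max + 1/H₁ − 2^A/H₂)/(1/H₁ − 1/H₂)). If 1 + H₁·P_max ≤ 2^A ≤ 1 + H₂·P_max and W ≤ D ≤ W·(P_max + 1/H₁ − 2^A/H₂)/(1/H₁ − 1/H₂), then 0 ≤ β̂₁ ≤ β̂_max ≤ 1 and g(β̂₁) ≤ g(β) for every β ∈ [0, β̂_max]. -/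
open Real

theorem stmt_18 (Tmax A Pmax L C₁ C₂ f₁ f₂ κ₁ κ₂ H₁ H₂ : ℝ)
    (hT : 0 < Tmax) (hA : 0 < A) (hP : 0 < Pmax) (hL : 0 < L)
    (hC₁ : 0 < C₁) (hC₂ : 0 < C₂) (hf₁ : 0 < f₁) (hf₂ : 0 < f₂)
    (hκ₁ : 0 < κ₁) (hκ₂ : 0 < κ₂) (hH₁ : 0 < H₁) (hH₁₂ : H₁ < H₂) :
    let g : ℝ → ℝ := fun β =>
      Tmax * ((2 : ℝ) ^ A / H₂ + (2 : ℝ) ^ (A * β) * (1 / H₁ - 1 / H₂) - 1 / H₁)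
        + (κ₁ * L * C₁ * f₁ ^ 2 - κ₂ * L * C₂ * f₂ ^ 2) * β
        + κ₂ * L * C₂ * f₂ ^ 2
    let D : ℝ := κ₂ * L * C₂ * f₂ ^ 2 - κ₁ * L * C₁ * f₁ ^ 2
    let W : ℝ := Tmax * A * Real.log 2 * (1 / H₁ - 1 / H₂)
    let β₁ : ℝ := (1 / A) * Real.logb 2 (D / W)
    let βmax : ℝ := (1 / A) * Real.logb 2
      ((Pmax + 1 / H₁ - (2 : ℝ) ^ A / H₂) / (1 / H₁ - 1 / H₂))
    1 + H₁ * Pmax ≤ (2 : ℝ) ^ A → (2 : ℝ) ^ A ≤ 1 + H₂ * Pmax →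
      W ≤ D → D ≤ W * ((Pmax + 1 / H₁ - (2 : ℝ) ^ A / H₂) / (1 / H₁ - 1 / H₂)) →
      (0 ≤ β₁ ∧ β₁ ≤ βmax ∧ βmax ≤ 1) ∧
        ∀ β ∈ Set.Icc (0 : ℝ) βmax, g β₁ ≤ g β := by
  intro g D W β₁ βmax h1 h2 h3 h4
  have hH₂ : 0 < H₂ := hH₁.trans hH₁₂
  have hΔ : 0 < 1 / H₁ - 1 / H₂ := by
    have : 1 / H₂ < 1 / H₁ := one_div_lt_one_div_of_lt hH₁ hH₁₂
    linarith
  have hlog2 : 0 < Real.log 2 := Real.log_pos one_lt_two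
  have hW : 0 < W := by
    have := mul_pos (mul_pos (mul_pos hT hA) hlog2) hΔ
    simpa [W, mul_assoc] using this
  have hD : 0 < D := hW.trans_le h3
  have h2A : 0 < (2 : ℝ) ^ A := Real.rpow_pos_of_pos two_pos A
  have hnum : 1 / H₁ - 1 / H₂ ≤ Pmax + 1 / H₁ - (2 : ℝ) ^ A / H₂ := by
    have h2' : (2 : ℝ) ^ A / H₂ ≤ (1 + H₂ * Pmax) / H₂ := by gcongr
    have h' : (1 + H₂ * Pmax) / H₂ = 1 / H₂ + Pmax := by field_simp
    linarith
  have hR1 : 1 ≤ (Pmax + 1 / H₁ - (2 : ℝ) ^ A / H₂) / (1 / H₁ - 1 / H₂) :=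
    (le_div_iff₀ hΔ).mpr (by linarith)
  have hRpos : 0 < (Pmax + 1 / H₁ - (2 : ℝ) ^ A / H₂) / (1 / H₁ - 1 / H₂) :=
    lt_of_lt_of_le one_pos hR1
  have hRA : (Pmax + 1 / H₁ - (2 : ℝ) ^ A / H₂) / (1 / H₁ - 1 / H₂) ≤ (2 : ℝ) ^ A := by
    rw [div_le_iff₀ hΔ]
    have hk : Pmax + 1 / H₁ ≤ (2 : ℝ) ^ A / H₁ := by
      rw [le_div_iff₀ hH₁]
      have e : (Pmax + 1 / H₁) * H₁ = H₁ * Pmax + 1 := by field_simp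
      rw [e]; linarith
    have hk2 : (2 : ℝ) ^ A / H₁ - (2 : ℝ) ^ A / H₂ = (2 : ℝ) ^ A * (1 / H₁ - 1 / H₂) := by
      ring
    linarith
  have hDW1 : 1 ≤ D / W := (le_div_iff₀ hW).mpr (by linarith)
  have hDWpos : 0 < D / W := div_pos hD hW
  have hβ₁0 : 0 ≤ β₁ := by
    have := Real.logb_nonneg one_lt_two hDW1
    have hAinv : 0 ≤ 1 / A := by positivity
    exact mul_nonneg hAinv this
  have hDWR : D / W ≤ (Pmax + 1 / H₁ - (2 : ℝ) ^ A / H₂) / (1 / H₁ - 1 / H₂) := by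
    rw [div_le_iff₀ hW]
    linarith [h4, (mul_comm W ((Pmax + 1 / H₁ - (2 : ℝ) ^ A / H₂) / (1 / H₁ - 1 / H₂)))]
  have hβ₁max : β₁ ≤ βmax := by
    have := Real.logb_le_logb_of_le one_lt_two hDWpos hDWR
    have hAinv : 0 ≤ 1 / A := by positivity
    exact mul_le_mul_of_nonneg_left this hAinv
  have hβmax1 : βmax ≤ 1 := by
    have hlb : Real.logb 2 ((Pmax + 1 / H₁ - (2 : ℝ) ^ A / H₂) / (1 / H₁ - 1 / H₂))
        ≤ Real.logb 2 ((2 : ℝ) ^ A) := Real.logb_le_logb_of_le one_lt_two hRpos hRA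
    rw [Real.logb_rpow two_pos (by norm_num)] at hlb
    have : βmax ≤ (1 / A) * A := mul_le_mul_of_nonneg_left hlb (by positivity)
    rwa [one_div_mul_cancel hA.ne'] at this
  refine ⟨⟨hβ₁0, hβ₁max, hβmax1⟩, ?_⟩
  have hkey : (2 : ℝ) ^ (A * β₁) = D / W := by
    have : A * β₁ = Real.logb 2 (D / W) := by
      simp only [β₁]; field_simp
    rw [this, Real.rpow_logb two_pos (by norm_num) hDWpos]
  intro β _
  have e1 : (2 : ℝ) ^ (A * β) = Real.exp (Real.log 2 * (A * β)) :=
    Real.rpow_def_of_pos two_pos _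
  have e2 : (2 : ℝ) ^ (A * β₁) = Real.exp (Real.log 2 * (A * β₁)) :=
    Real.rpow_def_of_pos two_pos _
  set u := Real.log 2 * (A * β) with hu
  set v := Real.log 2 * (A * β₁) with hv
  have hexp : Real.exp v * (u - v + 1) ≤ Real.exp u := by
    have h := Real.add_one_le_exp (u - v)
    calc Real.exp v * (u - v + 1) ≤ Real.exp v * Real.exp (u - v) :=
          mul_le_mul_of_nonneg_left h (Real.exp_pos v).le
      _ = Real.exp u := by rw [← Real.exp_add]; ring_nf
  have hev : Real.exp v = D / W := e2.symm.trans hkey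
  have hDv : D = W * Real.exp v := by rw [hev]; field_simp
  have hWdef : W = Tmax * A * Real.log 2 * (1 / H₁ - 1 / H₂) := rfl
  have hexp' : Tmax * (1 / H₁ - 1 / H₂) * (Real.exp v * (u - v + 1))
      ≤ Tmax * (1 / H₁ - 1 / H₂) * Real.exp u :=
    mul_le_mul_of_nonneg_left hexp (mul_pos hT hΔ).le
  have hid : Tmax * (1 / H₁ - 1 / H₂) * (Real.exp v * (u - v + 1))
      = Tmax * (1 / H₁ - 1 / H₂) * Real.exp v + D * (β - β₁) := by
    rw [hDv, hWdef, hu, hv]; ring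
  have hnegD : (κ₁ * L * C₁ * f₁ ^ 2 - κ₂ * L * C₂ * f₂ ^ 2) = -D := by
    have hd : D = κ₂ * L * C₂ * f₂ ^ 2 - κ₁ * L * C₁ * f₁ ^ 2 := rfl
    rw [hd]; ring
  show Tmax * ((2 : ℝ) ^ A / H₂ + (2 : ℝ) ^ (A * β₁) * (1 / H₁ - 1 / H₂) - 1 / H₁)
        + (κ₁ * L * C₁ * f₁ ^ 2 - κ₂ * L * C₂ * f₂ ^ 2) * β₁
        + κ₂ * L * C₂ * f₂ ^ 2
      ≤ Tmax * ((2 : ℝ) ^ A / H₂ + (2 : ℝ) ^ (A * β) * (1 / H₁ - 1 / H₂) - 1 / H₁)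
        + (κ₁ * L * C₁ * f₁ ^ 2 - κ₂ * L * C₂ * f₂ ^ 2) * β
        + κ₂ * L * C₂ * f₂ ^ 2
  rw [e1, e2, hnegD]
  linarith [hexp', hid]
end

section
/- Fix real parameters T_max > 0, A > 0, P_max > 0, L > 0, C₁, C₂, f₁, f₂, κ₁, κ₂ > 0 and 0 < H₁ < H₂; define g(β) = T_max·(2^A/H₂ + 2^(A·β)·(1/H₁ − 1/H₂) − 1/H₁) + (κ₁·L·C₁·f₁² − κ₂·L·C₂·f₂²)·β + κ₂·L·C₂·f₂², D = κ₂·L·C₂·f₂² − κ₁·L·C₁·f₁² and W = T_max·A·(ln 2)·(1/H₁ − 1/H₂). If 2^A ≤ 1 + H₂·P_max and D ≤ W, then g(0) ≤ g(β) for every β ≥ 0; in particular the minimum of g over the feasible region of task assignment ratios is attained at β* = 0. -/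
open Real

theorem stmt_19 (Tmax A Pmax L C₁ C₂ f₁ f₂ κ₁ κ₂ H₁ H₂ : ℝ)
    (hT : 0 < Tmax) (hA : 0 < A) (hP : 0 < Pmax) (hL : 0 < L)
    (hC₁ : 0 < C₁) (hC₂ : 0 < C₂) (hf₁ : 0 < f₁) (hf₂ : 0 < f₂)
    (hκ₁ : 0 < κ₁) (hκ₂ : 0 < κ₂) (hH₁ : 0 < H₁) (hH₁₂ : H₁ < H₂) :
    let g : ℝ → ℝ := fun β =>
      Tmax * ((2 : ℝ) ^ A / H₂ + (2 : ℝ) ^ (A * β) * (1 / H₁ - 1 / H₂) - 1 / H₁)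
        + (κ₁ * L * C₁ * f₁ ^ 2 - κ₂ * L * C₂ * f₂ ^ 2) * β
        + κ₂ * L * C₂ * f₂ ^ 2
    let D : ℝ := κ₂ * L * C₂ * f₂ ^ 2 - κ₁ * L * C₁ * f₁ ^ 2
    let W : ℝ := Tmax * A * Real.log 2 * (1 / H₁ - 1 / H₂)
    (2 : ℝ) ^ A ≤ 1 + H₂ * Pmax → D ≤ W →
      ∀ β : ℝ, 0 ≤ β → g 0 ≤ g β := by
  intro g D W _ hDW β hβ
  have hH₂ : 0 < H₂ := hH₁.trans hH₁₂
  have hdiff : 0 < 1 / H₁ - 1 / H₂ := by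
    have := one_div_lt_one_div_of_lt hH₁ hH₁₂
    linarith
  have hexp : 1 + A * β * Real.log 2 ≤ (2 : ℝ) ^ (A * β) := by
    rw [Real.rpow_def_of_pos (by norm_num : (0:ℝ) < 2), mul_comm (A * β)]
    have := Real.add_one_le_exp (Real.log 2 * (A * β))
    linarith
  have key : Tmax * ((1 + A * β * Real.log 2) * (1 / H₁ - 1 / H₂))
      ≤ Tmax * ((2 : ℝ) ^ (A * β) * (1 / H₁ - 1 / H₂)) := by
    apply mul_le_mul_of_nonneg_left _ hT.le
    exact mul_le_mul_of_nonneg_right hexp hdiff.le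
  have hDWβ : D * β ≤ W * β := mul_le_mul_of_nonneg_right hDW hβ
  simp only [g, D, W] at *
  rw [show A * 0 = 0 by ring, Real.rpow_zero]
  nlinarith [key, hDWβ]
end
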